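/- Let S = {s_1, …, s_m} be a multiset of nonnegative integers summing to κW, and consider κ+1 agents with identical additive valuations over goods, where in each of two rounds the arriving good set contains goods of values s_1, …, s_m together with one good of value 2W, and the allocation must be repetitive (the second-round goods are allocated identically to the first-round goods). Then S can be partitioned into κ subsets each summing to W if and only if there exists a repetitive allocation whose cumulative allocation is EF1 after both round 1 and round 2. -/
import Mathlib

open Finset

/-- Value of the goods of one round: the `j`-th good is worth `s j` for `j < m`,
and the last good is worth `2W`. -/
def wval (m : ℕ) (s : Fin m → ℕ) (W : ℕ) (j : Fin (m + 1)) : ℝ :=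
  if h : j.val < m then (s ⟨j.val, h⟩ : ℝ) else 2 * W

lemma wval_castSucc (m : ℕ) (s : Fin m → ℕ) (W : ℕ) (j : Fin m) :
    wval m s W j.castSucc = (s j : ℝ) := by
  simp [wval]

lemma wval_last (m : ℕ) (s : Fin m → ℕ) (W : ℕ) :
    wval m s W (Fin.last m) = 2 * W := by
  simp [wval]

lemma wval_nonneg (m : ℕ) (s : Fin m → ℕ) (W : ℕ) (j : Fin (m + 1)) :
    0 ≤ wval m s W j := by
  unfold wval; split <;> positivity

/-- Bundle-value decomposition. -/
lemma vsum (m : ℕ) (s : Fin m → ℕ) (W : ℕ) {β : Type*} [DecidableEq β]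
    (A : Fin (m + 1) → β) (i : β) :
    ∑ o ∈ Finset.univ.filter (fun o => A o = i), wval m s W o
      = ((∑ j ∈ Finset.univ.filter (fun j => A j.castSucc = i), s j : ℕ) : ℝ)
        + (if A (Fin.last m) = i then 2 * W else 0) := by
  rw [Finset.sum_filter, Fin.sum_univ_castSucc]
  push_cast [Finset.sum_filter]
  congr 1
  · exact Finset.sum_congr rfl fun j _ => by rw [wval_castSucc]
  · rw [wval_last]

/-- Identical valuations, κ+1 agents, the same m+1 goods arriving in each of two
rounds, repetitive allocation (round 2 is allocated exactly as round 1): `S` can be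
partitioned into κ subsets each summing to `W` iff there is a repetitive allocation
whose cumulative allocation is EF1 (for goods) after round 1 and after round 2. -/
theorem stmt15 (κ m : ℕ) (hκ : 0 < κ) (s : Fin m → ℕ) (W : ℕ)
    (hsum : ∑ j : Fin m, s j = κ * W) :
    (∃ P : Fin m → Fin κ, ∀ a : Fin κ,
        ∑ j ∈ Finset.univ.filter (fun j => P j = a), s j = W) ↔
    (∃ A : Fin (m + 1) → Fin (κ + 1),
      -- EF1 after round 1
      (∀ i j : Fin (κ + 1), Finset.univ.filter (fun o => A o = j) = ∅ ∨
        ∃ g ∈ Finset.univ.filter (fun o => A o = j),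
          ∑ o ∈ Finset.univ.filter (fun o => A o = i), wval m s W o ≥
            (∑ o ∈ Finset.univ.filter (fun o => A o = j), wval m s W o) - wval m s W g) ∧
      -- EF1 after round 2 (each good appears twice; one copy may be removed)
      (∀ i j : Fin (κ + 1), Finset.univ.filter (fun o => A o = j) = ∅ ∨
        ∃ g ∈ Finset.univ.filter (fun o => A o = j),
          2 * ∑ o ∈ Finset.univ.filter (fun o => A o = i), wval m s W o ≥
            2 * (∑ o ∈ Finset.univ.filter (fun o => A o = j), wval m s W o) - wval m s W g)) := by
  constructor
  · -- partition → TEF1 allocation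
    rintro ⟨P, hP⟩
    set A : Fin (m + 1) → Fin (κ + 1) :=
      fun j => if h : j.val < m then (P ⟨j.val, h⟩).castSucc else Fin.last κ with hA
    have hAlast : A (Fin.last m) = Fin.last κ := by simp [hA]
    have hAcs : ∀ j : Fin m, A j.castSucc = (P j).castSucc := by
      intro j; simp [hA, j.isLt]
    have hval : ∀ i, ∑ o ∈ Finset.univ.filter (fun o => A o = i), wval m s W o
        = (if i = Fin.last κ then (2 * W : ℝ) else (W : ℝ)) := by
      intro i
      rw [vsum]
      induction i using Fin.lastCases with
      | last =>
        rw [if_pos rfl, if_pos hAlast]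
        have : Finset.univ.filter (fun j : Fin m => A j.castSucc = Fin.last κ) = ∅ := by
          apply Finset.filter_false_of_mem
          intro j _
          rw [hAcs j]
          exact (Fin.castSucc_lt_last (P j)).ne
        rw [this]
        simp
      | cast b =>
        rw [if_neg (Fin.castSucc_lt_last b).ne, if_neg (by
          rw [hAlast]; exact fun h => (Fin.castSucc_lt_last b).ne h.symm)]
        have : Finset.univ.filter (fun j : Fin m => A j.castSucc = b.castSucc)
            = Finset.univ.filter (fun j : Fin m => P j = b) := by
          apply Finset.filter_congr
          intro j _
          rw [hAcs j]
          simp [Fin.castSucc_inj]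
        rw [this, hP b]
        simp
    have hvge : ∀ i, (W : ℝ) ≤ ∑ o ∈ Finset.univ.filter (fun o => A o = i), wval m s W o := by
      intro i
      rw [hval i]
      split
      · have : (0:ℝ) ≤ W := by positivity
        linarith
      · exact le_refl _
    have hvlast : ∑ o ∈ Finset.univ.filter (fun o => A o = Fin.last κ), wval m s W o
        = 2 * W := by rw [hval, if_pos rfl]
    have hvb : ∀ b : Fin κ,
        ∑ o ∈ Finset.univ.filter (fun o => A o = b.castSucc), wval m s W o = W := by
      intro b; rw [hval, if_neg (Fin.castSucc_lt_last b).ne]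
    have hW : (0:ℝ) ≤ W := by positivity
    refine ⟨A, ?_, ?_⟩
    · intro i j
      induction j using Fin.lastCases with
      | last =>
        right
        refine ⟨Fin.last m, by simp [hAlast], ?_⟩
        rw [wval_last]
        have := hvge i
        linarith [hvlast]
      | cast b =>
        rcases eq_or_ne (Finset.univ.filter (fun o => A o = b.castSucc)) ∅ with he | hne
        · exact Or.inl he
        · right
          obtain ⟨g, hg⟩ := Finset.nonempty_iff_ne_empty.mpr hne
          refine ⟨g, hg, ?_⟩
          have := hvge i
          have := wval_nonneg m s W g
          linarith [hvb b]
    · intro i j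
      induction j using Fin.lastCases with
      | last =>
        right
        refine ⟨Fin.last m, by simp [hAlast], ?_⟩
        rw [wval_last]
        have := hvge i
        linarith [hvlast]
      | cast b =>
        rcases eq_or_ne (Finset.univ.filter (fun o => A o = b.castSucc)) ∅ with he | hne
        · exact Or.inl he
        · right
          obtain ⟨g, hg⟩ := Finset.nonempty_iff_ne_empty.mpr hne
          refine ⟨g, hg, ?_⟩
          have := hvge i
          have := wval_nonneg m s W g
          linarith [hvb b]
  · -- TEF1 allocation → partition
    rintro ⟨A, h1, h2⟩
    set t : Fin (κ + 1) := A (Fin.last m) with ht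
    set σ : Fin (κ + 1) → ℕ :=
      fun i => ∑ j ∈ Finset.univ.filter (fun j => A j.castSucc = i), s j with hσdef
    have hfib : ∑ i : Fin (κ + 1), σ i = κ * W := by
      rw [hσdef, Finset.sum_fiberwise Finset.univ (fun j => A j.castSucc) s]
      exact hsum
    have hv : ∀ i, ∑ o ∈ Finset.univ.filter (fun o => A o = i), wval m s W o
        = (σ i : ℝ) + (if t = i then 2 * W else 0) := by
      intro i; rw [vsum]
    -- for each i ≠ t, 2 σ i ≥ σ t + 2 W (in ℕ)
    have key : ∀ i : Fin (κ + 1), i ≠ t → σ t + 2 * W ≤ 2 * σ i := by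
      intro i hi
      rcases h2 i t with hemp | ⟨g, hg, hineq⟩
      · exact absurd hemp (Finset.ne_empty_of_mem (a := Fin.last m) (by simp [ht]))
      · have hgA : A g = t := (Finset.mem_filter.mp hg).2
        have hwg : wval m s W g ≤ 2 * W + σ t := by
          by_cases hgm : g.val < m
          · have hcs : (⟨g.val, hgm⟩ : Fin m).castSucc = g := by ext; simp
            have hmem : (⟨g.val, hgm⟩ : Fin m) ∈
                Finset.univ.filter (fun j => A j.castSucc = t) := by
              simp [hcs, hgA]
            have hle : s ⟨g.val, hgm⟩ ≤ σ t := Finset.single_le_sum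
              (f := s) (fun _ _ => Nat.zero_le _) hmem
            have h1' : wval m s W g = (s ⟨g.val, hgm⟩ : ℝ) := by simp [wval, hgm]
            have h2' : ((s ⟨g.val, hgm⟩ : ℕ) : ℝ) ≤ (σ t : ℝ) := by exact_mod_cast hle
            have hW : (0:ℝ) ≤ 2 * W := by positivity
            rw [h1']; linarith
          · have h1' : wval m s W g = 2 * W := by simp [wval, hgm]
            have h2' : (0:ℝ) ≤ (σ t : ℝ) := by positivity
            rw [h1']; linarith
        have hvi := hv i
        have hvt := hv t
        rw [if_neg (fun h => hi h.symm)] at hvi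
        rw [if_pos rfl] at hvt
        rw [hvi, hvt] at hineq
        have : (σ t : ℝ) + 2 * W ≤ 2 * σ i := by push_cast; push_cast at hineq; linarith
        exact_mod_cast this
    -- σ t = 0
    have herase : σ t + ∑ i ∈ Finset.univ.erase t, σ i = κ * W := by
      rw [Finset.add_sum_erase Finset.univ σ (Finset.mem_univ t)]
      exact hfib
    have hcard : (Finset.univ.erase t).card = κ := by
      rw [Finset.card_erase_of_mem (Finset.mem_univ t), Finset.card_univ, Fintype.card_fin]
      omega
    have hσt : σ t = 0 := by
      have hlb : κ * (σ t + 2 * W) ≤ ∑ i ∈ Finset.univ.erase t, 2 * σ i := by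
        have := Finset.card_nsmul_le_sum (Finset.univ.erase t) (fun i => 2 * σ i)
          (σ t + 2 * W) (fun i hi => key i (Finset.ne_of_mem_erase hi))
        rwa [hcard, smul_eq_mul] at this
      rw [← Finset.mul_sum] at hlb
      have hE : ∑ i ∈ Finset.univ.erase t, σ i = κ * W - σ t := by omega
      rw [hE] at hlb
      have hle : σ t ≤ κ * W := by omega
      -- κ*(σt + 2W) ≤ 2*(κW - σt)
      have : κ * σ t + 2 * (κ * W) ≤ 2 * (κ * W) - 2 * σ t := by
        calc κ * σ t + 2 * (κ * W) = κ * (σ t + 2 * W) := by ring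
        _ ≤ 2 * (κ * W - σ t) := hlb
        _ = 2 * (κ * W) - 2 * σ t := by omega
      set x := κ * σ t with hx
      set C := κ * W with hC
      have hxn : 0 ≤ x := Nat.zero_le x
      omega
    -- each σ i = W for i ≠ t
    have hσW : ∀ i : Fin (κ + 1), i ≠ t → σ i = W := by
      intro i hi
      have h₁ : W ≤ σ i := by have := key i hi; omega
      have h₂ : σ i ≤ W := by
        have hmem : i ∈ Finset.univ.erase t := Finset.mem_erase.mpr ⟨hi, Finset.mem_univ i⟩
        have hsplit : σ i + ∑ j ∈ (Finset.univ.erase t).erase i, σ j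
            = ∑ j ∈ Finset.univ.erase t, σ j :=
          Finset.add_sum_erase _ σ hmem
        have hcard2 : ((Finset.univ.erase t).erase i).card = κ - 1 := by
          rw [Finset.card_erase_of_mem hmem, hcard]
        have hlb2 : (κ - 1) * W ≤ ∑ j ∈ (Finset.univ.erase t).erase i, σ j := by
          have := Finset.card_nsmul_le_sum ((Finset.univ.erase t).erase i) σ W
            (fun j hj => by
              have := key j (Finset.ne_of_mem_erase (Finset.mem_of_mem_erase hj))
              omega)
          rwa [hcard2, smul_eq_mul] at this
        have hsum' : ∑ j ∈ Finset.univ.erase t, σ j = κ * W := by omega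
        have hκ1 : (κ - 1) * W + W = κ * W := by
          cases κ with
          | zero => omega
          | succ n => simp [Nat.succ_sub_one, Nat.succ_mul]
        omega
      omega
    -- small goods of t all have value zero
    have hzero : ∀ j : Fin m, A j.castSucc = t → s j = 0 := by
      intro j hj
      have := (Finset.sum_eq_zero_iff.mp hσt) j (by simp [hj])
      exact this
    -- construct partition
    classical
    set a0 : Fin κ := ⟨0, hκ⟩ with ha0
    set P : Fin m → Fin κ := fun j =>
      if h : A j.castSucc = t then a0
      else Classical.choose (Fin.exists_succAbove_eq h) with hPdef
    have hPspec : ∀ (j : Fin m) (a : Fin κ),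
        P j = a ↔ ((A j.castSucc = t ∧ a = a0) ∨ A j.castSucc = t.succAbove a) := by
      intro j a
      rw [hPdef]
      by_cases h : A j.castSucc = t
      · simp only [dif_pos h]
        constructor
        · intro h'; exact Or.inl ⟨h, h'.symm⟩
        · rintro (⟨_, h'⟩ | h')
          · exact h'.symm
          · exact absurd (h ▸ h') (Fin.succAbove_ne t a).symm
      · simp only [dif_neg h]
        have hc := Classical.choose_spec (Fin.exists_succAbove_eq h)
        constructor
        · intro h'; right; rw [← h']; exact hc.symm
        · rintro (⟨h', _⟩ | h')
          · exact absurd h' h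
          · exact Fin.succAbove_right_injective (by rw [hc, h'])
    refine ⟨P, fun a => ?_⟩
    by_cases ha : a = a0
    · subst ha
      have hfil : Finset.univ.filter (fun j => P j = a0)
          = Finset.univ.filter (fun j => A j.castSucc = t)
            ∪ Finset.univ.filter (fun j => A j.castSucc = t.succAbove a0) := by
        rw [← Finset.filter_or]
        apply Finset.filter_congr
        intro j _
        rw [hPspec j a0]
        simp
      rw [hfil, Finset.sum_union (by
        rw [Finset.disjoint_filter]
        intro j _ h1' h2'
        exact Fin.succAbove_ne t a0 (h1'.symm.trans h2').symm)]
      have : ∑ j ∈ Finset.univ.filter (fun j => A j.castSucc = t), s j = 0 := hσt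
      rw [this, zero_add]
      exact hσW _ (Fin.succAbove_ne t a0)
    · have hfil : Finset.univ.filter (fun j => P j = a)
          = Finset.univ.filter (fun j => A j.castSucc = t.succAbove a) := by
        apply Finset.filter_congr
        intro j _
        rw [hPspec j a]
        simp [ha]
      rw [hfil]
      exact hσW _ (Fin.succAbove_ne t a)
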